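/- arXiv:2507.21401 — 5 statements merged into one kernel-verified Lean document; each statement's English description precedes it below -/
import Mathlib

section
/- Let λ > 1 and let C = {(x₁,x₂) ∈ ℝ² : x₁² + x₂² = 3}. Then the set of points x ∈ C for which there exist infinitely many (q, p₁, p₂) ∈ ℕ × ℤ² with max(|q·x₁ - p₁|, |q·x₂ - p₂|) < q^(-λ) is empty. -/
lemma zmod3_sq : ∀ a b : ZMod 3, a ^ 2 + b ^ 2 = 0 → a = 0 ∧ b = 0 := by decide

lemma no_rat_pt : ∀ q : ℕ, 0 < q → ∀ p₁ p₂ : ℤ, p₁ ^ 2 + p₂ ^ 2 ≠ 3 * (q : ℤ) ^ 2 := by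
  intro q
  induction q using Nat.strong_induction_on with
  | _ q ih =>
    intro hq p₁ p₂ h
    have h3 : ((p₁ : ZMod 3)) ^ 2 + ((p₂ : ZMod 3)) ^ 2 = 0 := by
      have := congrArg (Int.cast : ℤ → ZMod 3) h
      push_cast at this
      rw [show (3 : ZMod 3) = 0 by decide] at this
      simpa using this
    obtain ⟨h1, h2⟩ := zmod3_sq _ _ h3
    obtain ⟨a, ha⟩ := (ZMod.intCast_zmod_eq_zero_iff_dvd p₁ 3).mp h1
    obtain ⟨b, hb⟩ := (ZMod.intCast_zmod_eq_zero_iff_dvd p₂ 3).mp h2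
    subst ha hb
    have hq2 : 3 * (a ^ 2 + b ^ 2) = (q : ℤ) ^ 2 := by ring_nf at h ⊢; linarith
    have hq3 : ((q : ZMod 3)) ^ 2 = 0 := by
      have := congrArg (Int.cast : ℤ → ZMod 3) hq2
      push_cast at this
      rw [show (3 : ZMod 3) = 0 by decide] at this
      simpa using this.symm
    have hqz : (q : ZMod 3) = 0 := by
      have := pow_eq_zero_iff (n := 2) (by norm_num) |>.mp hq3
      exact this
    have h3q : (3 : ℕ) ∣ q := by
      have : ((q : ℤ) : ZMod 3) = 0 := by push_cast; exact hqz
      have := (ZMod.intCast_zmod_eq_zero_iff_dvd (q : ℤ) 3).mp this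
      exact_mod_cast this
    obtain ⟨r, hr⟩ := h3q
    have hr0 : 0 < r := by omega
    have hrq : r < q := by omega
    refine ih r hrq hr0 a b ?_
    subst hr
    push_cast at hq2
    nlinarith [hq2]

set_option maxHeartbeats 1000000 in
theorem stmt_0 (lam : ℝ) (hlam : 1 < lam) :
    {x : ℝ × ℝ | x.1 ^ 2 + x.2 ^ 2 = 3 ∧
      {t : ℕ × ℤ × ℤ |
        max |(t.1 : ℝ) * x.1 - (t.2.1 : ℝ)| |(t.1 : ℝ) * x.2 - (t.2.2 : ℝ)|
          < (t.1 : ℝ) ^ (-lam)}.Infinite} = ∅ := by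
  ext x
  simp only [Set.mem_setOf_eq, Set.mem_empty_iff_false, iff_false, not_and]
  intro hC hInf
  -- bounds on x
  have hx1 : |x.1| ≤ 2 := by
    rw [abs_le]; constructor <;> nlinarith [sq_nonneg x.1, sq_nonneg x.2]
  have hx2 : |x.2| ≤ 2 := by
    rw [abs_le]; constructor <;> nlinarith [sq_nonneg x.1, sq_nonneg x.2]
  set K : ℝ := (10 : ℝ) ^ ((lam - 1)⁻¹) with hK
  set Q : ℕ := ⌈K⌉₊ with hQdef
  set B : ℤ := 2 * (Q : ℤ) + 1 with hB
  have hsub : {t : ℕ × ℤ × ℤ |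
        max |(t.1 : ℝ) * x.1 - (t.2.1 : ℝ)| |(t.1 : ℝ) * x.2 - (t.2.2 : ℝ)|
          < (t.1 : ℝ) ^ (-lam)} ⊆ Set.Icc ((0 : ℕ), ((-B : ℤ), (-B : ℤ))) (Q, (B, B)) := by
    rintro ⟨q, p₁, p₂⟩ ht
    simp only [Set.mem_setOf_eq] at ht
    have hq0 : 0 < q := by
      by_contra h
      have hq : q = 0 := by omega
      subst hq
      simp only [Nat.cast_zero] at ht
      rw [Real.zero_rpow (ne_of_lt (by linarith : -lam < (0:ℝ)))] at ht
      have := le_max_left |(0 : ℝ) * x.1 - (p₁ : ℝ)| |(0 : ℝ) * x.2 - (p₂ : ℝ)|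
      have h0 := abs_nonneg ((0 : ℝ) * x.1 - (p₁ : ℝ))
      linarith
    have hq1 : (1 : ℝ) ≤ (q : ℝ) := by exact_mod_cast hq0
    have hqpos : (0 : ℝ) < (q : ℝ) := by linarith
    set δ : ℝ := (q : ℝ) ^ (-lam) with hδ
    have hδpos : 0 < δ := Real.rpow_pos_of_pos hqpos _
    have hδ1 : δ ≤ 1 := by
      calc δ ≤ (q : ℝ) ^ (0 : ℝ) :=
            Real.rpow_le_rpow_of_exponent_le hq1 (by linarith)
        _ = 1 := Real.rpow_zero _
    have he1 : |(q : ℝ) * x.1 - (p₁ : ℝ)| < δ := lt_of_le_of_lt (le_max_left _ _) ht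
    have he2 : |(q : ℝ) * x.2 - (p₂ : ℝ)| < δ := lt_of_le_of_lt (le_max_right _ _) ht
    set ε₁ : ℝ := (q : ℝ) * x.1 - (p₁ : ℝ) with hε₁
    set ε₂ : ℝ := (q : ℝ) * x.2 - (p₂ : ℝ) with hε₂
    have hp₁ : (p₁ : ℝ) = (q : ℝ) * x.1 - ε₁ := by ring
    have hp₂ : (p₂ : ℝ) = (q : ℝ) * x.2 - ε₂ := by ring
    -- the integer discriminant
    have hD : p₁ ^ 2 + p₂ ^ 2 - 3 * (q : ℤ) ^ 2 ≠ 0 := by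
      intro h
      exact no_rat_pt q hq0 p₁ p₂ (by linarith [h, sub_eq_zero.mp h])
    have hD1 : (1 : ℝ) ≤ |((p₁ ^ 2 + p₂ ^ 2 - 3 * (q : ℤ) ^ 2 : ℤ) : ℝ)| := by
      rw [← Int.cast_abs]
      exact_mod_cast Int.one_le_abs hD
    have habs1 : |ε₁| < δ := he1
    have habs2 : |ε₂| < δ := he2
    have hDval : ((p₁ ^ 2 + p₂ ^ 2 - 3 * (q : ℤ) ^ 2 : ℤ) : ℝ)
        = -2 * (q : ℝ) * (x.1 * ε₁ + x.2 * ε₂) + ε₁ ^ 2 + ε₂ ^ 2 := by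
      push_cast
      rw [hp₁, hp₂]
      nlinarith [hC]
    have hDbound : |((p₁ ^ 2 + p₂ ^ 2 - 3 * (q : ℤ) ^ 2 : ℤ) : ℝ)| ≤ 10 * ((q : ℝ) * δ) := by
      rw [hDval]
      have a1 : |ε₁| ≤ δ := le_of_lt habs1
      have a2 : |ε₂| ≤ δ := le_of_lt habs2
      have b1 : -δ ≤ ε₁ ∧ ε₁ ≤ δ := abs_le.mp a1
      have b2 : -δ ≤ ε₂ ∧ ε₂ ≤ δ := abs_le.mp a2
      have d1 : |x.1 * ε₁| ≤ 2 * δ := by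
        rw [abs_mul]; exact mul_le_mul hx1 a1 (abs_nonneg _) (by norm_num)
      have d2 : |x.2 * ε₂| ≤ 2 * δ := by
        rw [abs_mul]; exact mul_le_mul hx2 a2 (abs_nonneg _) (by norm_num)
      have hs : |x.1 * ε₁ + x.2 * ε₂| ≤ 4 * δ := by
        calc |x.1 * ε₁ + x.2 * ε₂| ≤ |x.1 * ε₁| + |x.2 * ε₂| := abs_add_le _ _
          _ ≤ 4 * δ := by linarith
      obtain ⟨hsl, hsr⟩ := abs_le.mp hs
      have hql : (q : ℝ) * (-(4 * δ)) ≤ (q : ℝ) * (x.1 * ε₁ + x.2 * ε₂) :=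
        mul_le_mul_of_nonneg_left hsl (le_of_lt hqpos)
      have hqr : (q : ℝ) * (x.1 * ε₁ + x.2 * ε₂) ≤ (q : ℝ) * (4 * δ) :=
        mul_le_mul_of_nonneg_left hsr (le_of_lt hqpos)
      have hsq1 : ε₁ ^ 2 ≤ δ ^ 2 := sq_le_sq' b1.1 b1.2
      have hsq2 : ε₂ ^ 2 ≤ δ ^ 2 := sq_le_sq' b2.1 b2.2
      have hδδ : δ ^ 2 ≤ δ := by nlinarith
      have hqδδ : δ ≤ (q : ℝ) * δ := by nlinarith
      rw [abs_le]
      constructor <;> nlinarith [sq_nonneg ε₁, sq_nonneg ε₂]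
    have hkey : (1 : ℝ) ≤ 10 * ((q : ℝ) * δ) := le_trans hD1 hDbound
    -- deduce q ≤ Q
    have hqδ : (q : ℝ) * δ = (q : ℝ) ^ (1 - lam) := by
      rw [hδ, show (1 : ℝ) - lam = 1 + (-lam) by ring, Real.rpow_add hqpos,
        Real.rpow_one]
    have hcancel : (q : ℝ) ^ (lam - 1) * (q : ℝ) ^ (1 - lam) = 1 := by
      rw [← Real.rpow_add hqpos]
      norm_num
    have hq10 : (q : ℝ) ^ (lam - 1) ≤ 10 := by
      have h1 : (q : ℝ) ^ (lam - 1) ≤ (q : ℝ) ^ (lam - 1) * (10 * ((q : ℝ) * δ)) :=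
        le_mul_of_one_le_right (le_of_lt (Real.rpow_pos_of_pos hqpos _)) hkey
      calc (q : ℝ) ^ (lam - 1) ≤ (q : ℝ) ^ (lam - 1) * (10 * ((q : ℝ) * δ)) := h1
        _ = 10 * ((q : ℝ) ^ (lam - 1) * ((q : ℝ) * δ)) := by ring
        _ = 10 := by rw [hqδ, hcancel]; ring
    have hqK : (q : ℝ) ≤ K := by
      have hexp : 0 < (lam - 1)⁻¹ := by
        apply inv_pos.mpr; linarith
      have := Real.rpow_le_rpow (le_of_lt (Real.rpow_pos_of_pos hqpos _)) hq10
        (le_of_lt hexp)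
      rwa [Real.rpow_rpow_inv (le_of_lt hqpos) (by intro h; rw [sub_eq_zero] at h; linarith : lam - 1 ≠ 0)] at this
    have hqQ : q ≤ Q := by
      have : (q : ℝ) ≤ (Q : ℝ) := le_trans hqK (Nat.le_ceil K)
      exact_mod_cast this
    -- bounds on p₁, p₂
    have hQq : (q : ℝ) ≤ (Q : ℝ) := by exact_mod_cast hqQ
    have hpb1 : |(p₁ : ℝ)| ≤ (B : ℝ) := by
      rw [hp₁, hB]
      push_cast
      calc |(q : ℝ) * x.1 - ε₁| ≤ |(q : ℝ) * x.1| + |ε₁| := abs_sub _ _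
        _ ≤ (q : ℝ) * 2 + 1 := by
            rw [abs_mul, abs_of_pos hqpos]
            have := mul_le_mul_of_nonneg_left hx1 (le_of_lt hqpos)
            linarith
        _ ≤ 2 * (Q : ℝ) + 1 := by linarith
    have hpb2 : |(p₂ : ℝ)| ≤ (B : ℝ) := by
      rw [hp₂, hB]
      push_cast
      calc |(q : ℝ) * x.2 - ε₂| ≤ |(q : ℝ) * x.2| + |ε₂| := abs_sub _ _
        _ ≤ (q : ℝ) * 2 + 1 := by
            rw [abs_mul, abs_of_pos hqpos]
            have := mul_le_mul_of_nonneg_left hx2 (le_of_lt hqpos)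
            linarith
        _ ≤ 2 * (Q : ℝ) + 1 := by linarith
    have hip1 : |p₁| ≤ B := by
      have : |(p₁ : ℝ)| ≤ ((B : ℤ) : ℝ) := hpb1
      rw [← Int.cast_abs] at this
      exact_mod_cast this
    have hip2 : |p₂| ≤ B := by
      have : |(p₂ : ℝ)| ≤ ((B : ℤ) : ℝ) := hpb2
      rw [← Int.cast_abs] at this
      exact_mod_cast this
    obtain ⟨hi1l, hi1r⟩ := abs_le.mp hip1
    obtain ⟨hi2l, hi2r⟩ := abs_le.mp hip2
    refine Set.mem_Icc.mpr ⟨⟨Nat.zero_le _, ?_, ?_⟩, ⟨hqQ, ?_, ?_⟩⟩ <;> assumption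
  exact hInf (Set.Finite.subset (Set.finite_Icc _ _) hsub)
end

section
/- Let P ∈ ℝ[x] have degree n, let J be an interval of length |J|, and suppose |P(x)| ≤ M for all x ∈ J. Then for each 0 ≤ i ≤ n and each x₀ ∈ J, the i-th derivative satisfies |P^{(i)}(x₀)| ≤ C(n) · M / |J|^i for a constant C(n) depending only on n. -/
/-!
Interpolate at the `n + 1` equally spaced nodes `j / (n + 1)` of `[0, 1]`: a polynomial of
degree at most `n` is `P = ∑ⱼ P(vⱼ) ℓⱼ` with the Lagrange basis `ℓⱼ`, so
`|P⁽ⁱ⁾(x)| ≤ M ∑ⱼ |ℓⱼ⁽ⁱ⁾(x)|`, and the right-hand side is bounded on `[0, 1]` by a constant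
depending only on `n`. The affine change of variables `x = a + (b - a) t` transports `[0, 1]`
to `[a, b]` and multiplies the `i`-th derivative by `(b - a)ⁱ`.
-/

open Polynomial Finset

namespace Polynomial

noncomputable def absCoeffSum (q : ℝ[X]) : ℝ :=
  ∑ k ∈ range (q.natDegree + 1), |q.coeff k|

lemma absCoeffSum_nonneg (q : ℝ[X]) : 0 ≤ q.absCoeffSum :=
  sum_nonneg fun _ _ => abs_nonneg _

lemma abs_eval_le_absCoeffSum (q : ℝ[X]) {x : ℝ} (hx : |x| ≤ 1) :
    |q.eval x| ≤ q.absCoeffSum := by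
  rw [eval_eq_sum_range]
  refine (abs_sum_le_sum_abs _ _).trans (sum_le_sum fun k _ => ?_)
  rw [abs_mul, abs_pow]
  exact mul_le_of_le_one_right (abs_nonneg _) (pow_le_one₀ (abs_nonneg x) hx)

lemma iterate_derivative_comp_C_mul_X_add_C {R : Type*} [CommSemiring R]
    (p : R[X]) (c d : R) (i : ℕ) :
    derivative^[i] (p.comp (C c * X + C d)) =
      C (c ^ i) * (derivative^[i] p).comp (C c * X + C d) := by
  induction i with
  | zero => simp
  | succ i ih =>
    rw [Function.iterate_succ_apply', ih, derivative_C_mul, derivative_comp,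
      Function.iterate_succ_apply']
    simp only [derivative_add, derivative_C_mul_X, derivative_C, add_zero, pow_succ, C_mul]
    ring

lemma iterate_derivative_eval_eq_sum_lagrangeBasis {F ι : Type*} [Field F] [DecidableEq ι]
    {s : Finset ι} {v : ι → F} (hvs : Set.InjOn v s) {P : F[X]} (hP : P.degree < #s)
    (i : ℕ) (x : F) :
    (derivative^[i] P).eval x =
      ∑ j ∈ s, P.eval (v j) * (derivative^[i] (Lagrange.basis s v j)).eval x := by
  conv_lhs => rw [Lagrange.eq_interpolate hvs hP, Lagrange.interpolate_apply]
  simp only [iterate_derivative_sum, iterate_derivative_C_mul, eval_finsetSum, eval_C_mul]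

end Polynomial

noncomputable def unitNodes (n : ℕ) (j : ℕ) : ℝ := j / (n + 1)

lemma injOn_unitNodes (n : ℕ) : Set.InjOn (unitNodes n) (range (n + 1)) := fun j _ k _ h => by
  exact_mod_cast (div_left_inj' (Nat.cast_add_one_ne_zero n : (n : ℝ) + 1 ≠ 0)).mp h

lemma unitNodes_mem_Icc {n j : ℕ} (hj : j ∈ range (n + 1)) : unitNodes n j ∈ Set.Icc 0 1 := by
  have hjn : (j : ℝ) ≤ n := by exact_mod_cast Nat.lt_succ_iff.mp (mem_range.mp hj)
  exact ⟨by unfold unitNodes; positivity, (div_le_one (by positivity)).mpr (by linarith)⟩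

noncomputable def markovConstant (n : ℕ) : ℝ :=
  1 + ∑ i ∈ range (n + 1), ∑ j ∈ range (n + 1),
    (derivative^[i] (Lagrange.basis (range (n + 1)) (unitNodes n) j)).absCoeffSum

lemma markovConstant_pos (n : ℕ) : 0 < markovConstant n := by
  unfold markovConstant
  have := sum_nonneg fun i (_ : i ∈ range (n + 1)) =>
    sum_nonneg fun j (_ : j ∈ range (n + 1)) =>
      (derivative^[i] (Lagrange.basis (range (n + 1)) (unitNodes n) j)).absCoeffSum_nonneg
  linarith

lemma abs_iterate_derivative_eval_le_of_unitInterval {n : ℕ} {P : ℝ[X]} (hP : P.natDegree ≤ n)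
    {M : ℝ} (hM : ∀ x ∈ Set.Icc (0 : ℝ) 1, |P.eval x| ≤ M) {i : ℕ} (hi : i ≤ n)
    {x₀ : ℝ} (hx₀ : x₀ ∈ Set.Icc (0 : ℝ) 1) :
    |(derivative^[i] P).eval x₀| ≤ markovConstant n * M := by
  set s := range (n + 1)
  set ℓ : ℕ → ℝ[X] := fun j => derivative^[i] (Lagrange.basis s (unitNodes n) j)
  have hM0 : 0 ≤ M := (abs_nonneg _).trans (hM 0 ⟨le_rfl, zero_le_one⟩)
  have hdeg : P.degree < #s := by
    rw [card_range]
    exact (degree_le_natDegree.trans (WithBot.coe_le_coe.mpr hP)).trans_lt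
      (WithBot.coe_lt_coe.mpr n.lt_succ_self)
  have hx₀' : |x₀| ≤ 1 := abs_le.mpr ⟨by linarith [hx₀.1], hx₀.2⟩
  have hℓ : ∑ j ∈ s, (ℓ j).absCoeffSum ≤ markovConstant n := by
    unfold markovConstant
    have := single_le_sum
      (f := fun i => ∑ j ∈ s, (derivative^[i] (Lagrange.basis s (unitNodes n) j)).absCoeffSum)
      (fun i _ => sum_nonneg fun j _ => absCoeffSum_nonneg _) (mem_range.mpr (Nat.lt_succ_of_le hi))
    linarith
  rw [iterate_derivative_eval_eq_sum_lagrangeBasis (injOn_unitNodes n) hdeg]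
  calc |∑ j ∈ s, P.eval (unitNodes n j) * (ℓ j).eval x₀|
      ≤ ∑ j ∈ s, |P.eval (unitNodes n j)| * |(ℓ j).eval x₀| := by
        simpa only [← abs_mul] using abs_sum_le_sum_abs _ _
    _ ≤ ∑ j ∈ s, M * (ℓ j).absCoeffSum := sum_le_sum fun j hj =>
        mul_le_mul (hM _ (unitNodes_mem_Icc hj)) ((ℓ j).abs_eval_le_absCoeffSum hx₀')
          (abs_nonneg _) hM0
    _ = M * ∑ j ∈ s, (ℓ j).absCoeffSum := (mul_sum _ _ _).symm
    _ ≤ markovConstant n * M := by rw [mul_comm]; exact mul_le_mul_of_nonneg_right hℓ hM0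

lemma abs_iterate_derivative_eval_le_of_Icc {n : ℕ} {P : ℝ[X]} (hP : P.natDegree ≤ n)
    {M a b : ℝ} (hab : a < b) (hM : ∀ x ∈ Set.Icc a b, |P.eval x| ≤ M) {i : ℕ} (hi : i ≤ n)
    {x₀ : ℝ} (hx₀ : x₀ ∈ Set.Icc a b) :
    |(derivative^[i] P).eval x₀| ≤ markovConstant n * M / (b - a) ^ i := by
  have hc : 0 < b - a := sub_pos.mpr hab
  set Q := P.comp (C (b - a) * X + C a)
  have hQ : ∀ t, Q.eval t = P.eval ((b - a) * t + a) := fun t => by simp [Q]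
  have hQdeg : Q.natDegree ≤ n := by
    rwa [natDegree_comp, natDegree_linear hc.ne', mul_one]
  have hQM : ∀ t ∈ Set.Icc (0 : ℝ) 1, |Q.eval t| ≤ M := fun t ⟨h0, h1⟩ => by
    rw [hQ]; exact hM _ ⟨by nlinarith, by nlinarith⟩
  set t₀ := (x₀ - a) / (b - a)
  have ht₀ : t₀ ∈ Set.Icc (0 : ℝ) 1 :=
    ⟨div_nonneg (by linarith [hx₀.1]) hc.le, (div_le_one hc).mpr (by linarith [hx₀.2])⟩
  have hx₀_eq : (b - a) * t₀ + a = x₀ := by simp only [t₀]; field_simp; ring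
  have key := abs_iterate_derivative_eval_le_of_unitInterval hQdeg hQM hi ht₀
  rw [iterate_derivative_comp_C_mul_X_add_C, eval_mul, eval_C, eval_comp] at key
  simp only [eval_add, eval_mul, eval_C, eval_X, hx₀_eq, abs_mul, abs_pow, abs_of_pos hc] at key
  rw [le_div_iff₀ (pow_pos hc i), mul_comm]
  exact key

/-- a Markov/Remez-type inequality: if `|P| ≤ M` on an interval `[a,b]`,
then all derivatives of `P` on `[a,b]` satisfy `|P^{(i)}(x₀)| ≤ C(n) M / (b-a)^i`. -/
theorem stmt_5 (n : ℕ) :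
    ∃ C : ℝ, 0 < C ∧ ∀ (P : Polynomial ℝ) (M a b : ℝ), P.natDegree = n → a < b →
      (∀ x ∈ Set.Icc a b, |P.eval x| ≤ M) →
      ∀ i ≤ n, ∀ x₀ ∈ Set.Icc a b,
        |((Polynomial.derivative^[i]) P).eval x₀| ≤ C * M / (b - a) ^ i :=
  ⟨markovConstant n, markovConstant_pos n, fun _ _ _ _ hP hab hM _ hi _ hx₀ =>
    abs_iterate_derivative_eval_le_of_Icc hP.le hab hM hi hx₀⟩
end

section
/- Let P ∈ ℝ[x] with deg P = n ≥ 2, H(P) = |aₙ| (leading coefficient has maximal absolute value), and suppose there exist real numbers w > 0, κ, η with -w/2 < η < w/2 and an interval J with |J| ≥ c·Q^{-w/2-η} (for a constant c > 0 and Q ≥ 2) such that: (i) all pairwise root distances of P are at most Q^{-κ}, and (ii) |P(x)| < |aₙ| Q^{-w} for all x ∈ J. Then the discriminant satisfies |D(P)| ≤ C(n,c) · |aₙ|^{2n-2} · Q^{-w - (n-1)(n-2)κ + 2η}. -/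
/-!
Write `x₁, …, xₙ` for the roots of `P` and `A` for its leading coefficient. Of `n + 1` equally
spaced points of `J = [a, b]` one, `t`, is at distance at least `δ = |J| / 2n` from every root,
since the points are `2δ` apart. Then `∏ |t - xⱼ| = |P(t)| / |A| < Q^{-w}`. If `xᵢ` is the root
nearest to `t`, then `|xᵢ - xⱼ| ≤ 2 |t - xⱼ|` and `|t - xᵢ| ≥ δ`, so
`∏_{j ≠ i} |xᵢ - xⱼ| ≤ 2^{n-1} Q^{-w} / δ ≪ Q^{-w/2+η}`; this is `|P'(xᵢ)| / |A|`. In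
`|D(P)| / |A|^{2n-2} = ∏_{j ≠ k} |xⱼ - xₖ|` this product occurs twice, and each of the remaining
`(n-1)(n-2)` factors is at most `Q^{-κ}`.
-/

open Finset Polynomial

section Metric

variable {α ι κ : Type*} [PseudoMetricSpace α] [Fintype ι]

theorem exists_forall_le_dist_of_pairwise [Fintype κ] (hcard : Fintype.card ι < Fintype.card κ)
    {δ : ℝ} (p : κ → α) (hp : Pairwise fun k l => 2 * δ ≤ dist (p k) (p l)) (x : ι → α) :
    ∃ k, ∀ j, δ ≤ dist (p k) (x j) := by
  by_contra! hnear
  choose f hf using hnear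
  obtain ⟨k, l, hkl, hfkl⟩ := Fintype.exists_ne_map_eq_of_card_lt f hcard
  have := dist_triangle_right (p k) (p l) (x (f k))
  linarith [hp hkl, hf k, hfkl ▸ hf l]

theorem prod_erase_dist_le_of_forall_dist_le [DecidableEq ι] (x : ι → α) (z : α) {i : ι}
    (hi : ∀ j, dist z (x i) ≤ dist z (x j)) {δ : ℝ} (hδ : 0 < δ) (hzi : δ ≤ dist z (x i)) :
    ∏ j ∈ univ.erase i, dist (x i) (x j) ≤
      2 ^ (Fintype.card ι - 1) * (∏ j, dist z (x j)) / δ := by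
  have hrest : 0 ≤ ∏ j ∈ univ.erase i, dist z (x j) := prod_nonneg fun _ _ => dist_nonneg
  calc ∏ j ∈ univ.erase i, dist (x i) (x j)
      ≤ ∏ j ∈ univ.erase i, 2 * dist z (x j) := by
        refine prod_le_prod (fun _ _ => dist_nonneg) fun j _ => ?_
        linarith [dist_triangle_left (x i) (x j) z, hi j]
    _ = 2 ^ (Fintype.card ι - 1) * ∏ j ∈ univ.erase i, dist z (x j) := by
        rw [prod_mul_distrib, prod_const, card_erase_of_mem (mem_univ i), card_univ]
    _ ≤ 2 ^ (Fintype.card ι - 1) * (∏ j, dist z (x j)) / δ := by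
        rw [← mul_prod_erase univ _ (mem_univ i), mul_div_assoc]
        gcongr
        rw [le_div_iff₀ hδ, mul_comm]
        exact mul_le_mul_of_nonneg_right hzi hrest

theorem prod_prod_Ioi_dist_sq_eq [LinearOrder ι] [LocallyFiniteOrderTop ι]
    [LocallyFiniteOrderBot ι] (x : ι → α) :
    ∏ i, ∏ j ∈ Ioi i, dist (x i) (x j) ^ 2 = ∏ i, ∏ j ∈ univ.erase i, dist (x i) (x j) := by
  calc ∏ i, ∏ j ∈ Ioi i, dist (x i) (x j) ^ 2
      = ∏ i, ∏ j ∈ Ioi i, dist (x j) (x i) * dist (x i) (x j) := by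
        simp_rw [sq, dist_comm (x _) (x _)]
    _ = ∏ i, ∏ j ∈ univ.erase i, dist (x i) (x j) := by
        simp_rw [prod_prod_Ioi_mul_eq_prod_prod_off_diag, compl_singleton, dist_comm]

theorem prod_prod_erase_dist_le [DecidableEq ι] (x : ι → α) (k : ι) {M : ℝ}
    (hM : ∀ i j, dist (x i) (x j) ≤ M) :
    ∏ i, ∏ j ∈ univ.erase i, dist (x i) (x j) ≤
      (∏ j ∈ univ.erase k, dist (x k) (x j)) ^ 2 *
        M ^ ((Fintype.card ι - 1) * (Fintype.card ι - 2)) := by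
  have hsplit : ∀ i ∈ univ.erase k, ∏ j ∈ univ.erase i, dist (x i) (x j) =
      dist (x k) (x i) * ∏ j ∈ (univ.erase i).erase k, dist (x i) (x j) := fun i hi => by
    rw [dist_comm (x k), mul_prod_erase _ (fun j => dist (x i) (x j))
      (mem_erase.2 ⟨(ne_of_mem_erase hi).symm, mem_univ k⟩)]
  have hrest : ∏ i ∈ univ.erase k, ∏ j ∈ (univ.erase i).erase k, dist (x i) (x j) ≤
      M ^ ((Fintype.card ι - 1) * (Fintype.card ι - 2)) := by
    calc _ ≤ ∏ i ∈ univ.erase k, ∏ j ∈ (univ.erase i).erase k, M :=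
          prod_le_prod (fun _ _ => prod_nonneg fun _ _ => dist_nonneg)
            fun i _ => prod_le_prod (fun _ _ => dist_nonneg) fun j _ => hM i j
      _ = _ := by
        rw [prod_congr rfl fun i hi => by
          rw [prod_const, card_erase_of_mem (mem_erase.2 ⟨(ne_of_mem_erase hi).symm, mem_univ k⟩),
            card_erase_of_mem (mem_univ i)],
          prod_const, ← pow_mul, card_erase_of_mem (mem_univ k), card_univ, Nat.sub_sub, mul_comm]
  rw [← mul_prod_erase univ _ (mem_univ k), prod_congr rfl hsplit, prod_mul_distrib, ← mul_assoc,
    ← sq]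
  exact mul_le_mul_of_nonneg_left hrest (sq_nonneg _)

end Metric

theorem exists_mem_Icc_forall_le_dist {ι : Type*} [Fintype ι] [Nonempty ι] {a b : ℝ}
    (hab : a ≤ b) (x : ι → ℂ) :
    ∃ t ∈ Set.Icc a b, ∀ j, (b - a) / (2 * Fintype.card ι) ≤ dist (t : ℂ) (x j) := by
  set n := Fintype.card ι
  have hn : (0 : ℝ) < n := by simp [n, Fintype.card_pos]
  have hh : 0 ≤ (b - a) / n := div_nonneg (sub_nonneg.2 hab) hn.le
  let p : Fin (n + 1) → ℝ := fun k => a + (k : ℕ) * ((b - a) / n)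
  have hp_mem : ∀ k, p k ∈ Set.Icc a b := fun k => by
    have hk : ((k : ℕ) : ℝ) ≤ n := by exact_mod_cast Nat.le_of_lt_succ k.2
    have hb : (n : ℝ) * ((b - a) / n) = b - a := mul_div_cancel₀ _ hn.ne'
    constructor <;> nlinarith [mul_le_mul_of_nonneg_right hk hh]
  have hp_sep : Pairwise fun k l => 2 * ((b - a) / (2 * n)) ≤ dist (p k : ℂ) (p l) := by
    intro k l hkl
    rw [show 2 * ((b - a) / (2 * n)) = (b - a) / n by field_simp, Complex.isometry_ofReal.dist_eq,
      Real.dist_eq, add_sub_add_left_eq_sub, ← sub_mul, abs_mul, ← Real.dist_eq,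
      Nat.dist_cast_real, abs_of_nonneg hh]
    exact le_mul_of_one_le_left hh (Nat.pairwise_one_le_dist (Fin.val_injective.ne hkl))
  obtain ⟨k, hk⟩ := exists_forall_le_dist_of_pairwise (by simp [n]) (fun k => (p k : ℂ)) hp_sep x
  exact ⟨p k, hp_mem k, hk⟩

theorem abs_eval_eq_mul_prod_dist {ι : Type*} [Fintype ι] {P : ℝ[X]} {a : ℝ} {x : ι → ℂ}
    (hP : P.map (algebraMap ℝ ℂ) = C (a : ℂ) * ∏ i, (X - C (x i))) (s : ℝ) :
    |P.eval s| = |a| * ∏ i, dist (s : ℂ) (x i) := by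
  have h := congrArg (eval (algebraMap ℝ ℂ s)) hP
  rw [eval_map, eval₂_at_apply] at h
  simpa [eval_prod, norm_prod, dist_eq_norm] using congrArg norm h

theorem two_pow_mul_rpow_div_le {n : ℕ} (hn : n ≠ 0) {c Q w η L : ℝ} (hc : 0 < c) (hQ : 0 < Q)
    (hL : c * Q ^ (-w / 2 - η) ≤ L) :
    2 ^ (n - 1) * Q ^ (-w) / (L / (2 * n)) ≤ 2 ^ n * n / c * Q ^ (-w / 2 + η) := by
  have hL0 : 0 < L := lt_of_lt_of_le (by positivity) hL
  have hsplit : Q ^ (-w) = Q ^ (-w / 2 + η) * Q ^ (-w / 2 - η) := by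
    rw [← Real.rpow_add hQ]; ring_nf
  have h2 : (2 : ℝ) ^ n = 2 * 2 ^ (n - 1) := by rw [← pow_succ']; congr; omega
  calc 2 ^ (n - 1) * Q ^ (-w) / (L / (2 * n))
      = 2 ^ n * n * Q ^ (-w / 2 + η) * (Q ^ (-w / 2 - η) / L) := by
        rw [hsplit, h2]; field_simp
    _ ≤ 2 ^ n * n * Q ^ (-w / 2 + η) * (1 / c) := by
        refine mul_le_mul_of_nonneg_left ?_ (by positivity)
        rw [div_le_div_iff₀ hL0 hc]; linarith
    _ = 2 ^ n * n / c * Q ^ (-w / 2 + η) := by ring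

theorem mul_rpow_sq_mul_rpow_pow {Q : ℝ} (hQ : 0 < Q) {n : ℕ} (hn : 2 ≤ n) (K w κ η : ℝ) :
    (K * Q ^ (-w / 2 + η)) ^ 2 * (Q ^ (-κ)) ^ ((n - 1) * (n - 2)) =
      K ^ 2 * Q ^ (-w - ((n : ℝ) - 1) * ((n : ℝ) - 2) * κ + 2 * η) := by
  rw [mul_pow, ← Real.rpow_natCast (Q ^ (-w / 2 + η)) 2, ← Real.rpow_natCast (Q ^ (-κ)),
    ← Real.rpow_mul hQ.le, ← Real.rpow_mul hQ.le, mul_assoc, ← Real.rpow_add hQ]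
  push_cast [Nat.cast_sub (by omega : 1 ≤ n), Nat.cast_sub hn]
  ring_nf

/-- Lemma 6 of the paper: bound on the discriminant of a polynomial
that is small on an interval and has all roots within distance `Q^{-κ}`. -/
theorem stmt_7 (n : ℕ) (hn : 2 ≤ n) (c : ℝ) (hc : 0 < c) :
    ∃ C : ℝ, 0 < C ∧
      ∀ (P : Polynomial ℝ) (x : Fin n → ℂ) (Q w κ η a b : ℝ),
        P.natDegree = n →
        (∀ i, |P.coeff i| ≤ |P.leadingCoeff|) →
        2 ≤ Q → 0 < w → -w / 2 < η → η < w / 2 →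
        c * Q ^ (-w / 2 - η) ≤ b - a →
        P.map (algebraMap ℝ ℂ) =
          Polynomial.C ((P.leadingCoeff : ℂ)) * ∏ i, (Polynomial.X - Polynomial.C (x i)) →
        (∀ i j, ‖x i - x j‖ ≤ Q ^ (-κ)) →
        (∀ t ∈ Set.Icc a b, |P.eval t| < |P.leadingCoeff| * Q ^ (-w)) →
        ‖(P.leadingCoeff : ℂ) ^ (2 * n - 2) *
            ∏ i, ∏ j ∈ Finset.Ioi i, (x i - x j) ^ 2‖ ≤
          C * |P.leadingCoeff| ^ (2 * n - 2) *
            Q ^ (-w - ((n : ℝ) - 1) * ((n : ℝ) - 2) * κ + 2 * η) := by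
  refine ⟨(2 ^ n * n / c) ^ 2, by positivity, ?_⟩
  intro P x Q w κ η a b _ _ hQ _ _ _ hJ hmap hroots hsmall
  have hQ0 : 0 < Q := by linarith
  have hba : 0 < b - a := lt_of_lt_of_le (by positivity) hJ
  have hδ : 0 < (b - a) / (2 * n) := by positivity
  have : Nonempty (Fin n) := ⟨⟨0, by omega⟩⟩
  obtain ⟨t, ht, hfar⟩ := exists_mem_Icc_forall_le_dist (sub_nonneg.1 hba.le) x
  have hprod : ∏ j, dist (t : ℂ) (x j) < Q ^ (-w) := by
    have := hsmall t ht
    rw [abs_eval_eq_mul_prod_dist hmap] at this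
    exact lt_of_mul_lt_mul_left this (abs_nonneg _)
  obtain ⟨i, -, hi⟩ := exists_min_image univ (fun j => dist (t : ℂ) (x j)) univ_nonempty
  rw [Fintype.card_fin] at hfar
  have hroot : ∏ j ∈ univ.erase i, dist (x i) (x j) ≤ 2 ^ n * n / c * Q ^ (-w / 2 + η) := by
    calc _ ≤ 2 ^ (n - 1) * (∏ j, dist (t : ℂ) (x j)) / ((b - a) / (2 * n)) := by
          simpa using
            prod_erase_dist_le_of_forall_dist_le x t (fun j => hi j (mem_univ j)) hδ (hfar i)
      _ ≤ 2 ^ (n - 1) * Q ^ (-w) / ((b - a) / (2 * n)) := by gcongr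
      _ ≤ _ := two_pow_mul_rpow_div_le (by omega) hc hQ0 hJ
  calc _ = |P.leadingCoeff| ^ (2 * n - 2) * ∏ i, ∏ j ∈ Ioi i, dist (x i) (x j) ^ 2 := by
        simp [norm_prod, dist_eq_norm]
    _ ≤ |P.leadingCoeff| ^ (2 * n - 2) *
          ((2 ^ n * n / c * Q ^ (-w / 2 + η)) ^ 2 * (Q ^ (-κ)) ^ ((n - 1) * (n - 2))) := by
        rw [prod_prod_Ioi_dist_sq_eq]
        gcongr
        have hdist : ∀ i j, dist (x i) (x j) ≤ Q ^ (-κ) := by simpa [dist_eq_norm] using hroots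
        refine (prod_prod_erase_dist_le x i hdist).trans ?_
        rw [Fintype.card_fin]
        gcongr
    _ = _ := by rw [mul_rpow_sq_mul_rpow_pow hQ0 hn]; ring
end

section
/- Let u, v be coprime integers with v ≥ 1, let 0 ≤ r < v satisfy v ∣ (ur + 3), and set x₀ = u/v. Then the two integer vectors p₁ = (v³, v²u, vu², u³) and p₂ = (v²r, v(ur+1), u(ur+2), u²(ur+3)/v) are linearly independent over ℚ and both satisfy the pair of linear equations -x₀²p₀ + 2x₀p₁ - p₂ = 0 and -2x₀³p₀ + 3x₀²p₁ - p₃ = 0 (where (p₀,p₁,p₂,p₃) denote the coordinates of each vector). -/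
/-- the two integer vectors `p₁ = (v³, v²u, vu², u³)` and
`p₂ = (v²r, v(ur+1), u(ur+2), u²(ur+3)/v)` are linearly independent over `ℚ` and
both satisfy `-x₀²p₀ + 2x₀p₁ - p₂ = 0` and `-2x₀³p₀ + 3x₀²p₁ - p₃ = 0`,
where `x₀ = u/v`. -/
theorem stmt_12 (u v r : ℤ) (hv : 1 ≤ v) (hcop : IsCoprime u v)
    (hr0 : 0 ≤ r) (hrv : r < v) (hdvd : v ∣ (u * r + 3)) :
    LinearIndependent ℚ
      ![(![(v : ℚ) ^ 3, (v : ℚ) ^ 2 * u, (v : ℚ) * u ^ 2, (u : ℚ) ^ 3] : Fin 4 → ℚ),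
        ![(v : ℚ) ^ 2 * r, (v : ℚ) * (u * r + 1), (u : ℚ) * (u * r + 2),
          (u : ℚ) ^ 2 * (u * r + 3) / v]] ∧
    ∀ p ∈ ({![(v : ℚ) ^ 3, (v : ℚ) ^ 2 * u, (v : ℚ) * u ^ 2, (u : ℚ) ^ 3],
        ![(v : ℚ) ^ 2 * r, (v : ℚ) * (u * r + 1), (u : ℚ) * (u * r + 2),
          (u : ℚ) ^ 2 * (u * r + 3) / v]} : Set (Fin 4 → ℚ)),
      -((u : ℚ) / v) ^ 2 * p 0 + 2 * ((u : ℚ) / v) * p 1 - p 2 = 0 ∧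
      -2 * ((u : ℚ) / v) ^ 3 * p 0 + 3 * ((u : ℚ) / v) ^ 2 * p 1 - p 3 = 0 := by
  have hv0 : (v : ℚ) ≠ 0 := by
    exact_mod_cast (by omega : v ≠ 0)
  constructor
  · rw [linearIndependent_fin2]
    constructor
    · intro h
      have h0 := congrFun h 0
      have h1 := congrFun h 1
      simp at h0 h1
      have hr : (r : ℚ) = 0 := by
        rcases h0 with h0 | h0
        · exact absurd (by exact_mod_cast h0) hv0
        · exact_mod_cast h0
      rw [hr] at h1
      simp at h1
      exact hv0 (by exact_mod_cast h1)
    · intro a h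
      have h0 := congrFun h 0
      have h1 := congrFun h 1
      simp only [Pi.smul_apply, Matrix.cons_val_zero, Matrix.cons_val_one,
        Matrix.head_cons, smul_eq_mul] at h0 h1
      have hav : a * r = v :=
        mul_left_cancel₀ (pow_ne_zero 2 hv0)
          (by linear_combination h0 : (v:ℚ)^2 * (a * r) = (v:ℚ)^2 * v)
      have ha1 : a * ((u:ℚ) * r + 1) = v * u :=
        mul_left_cancel₀ hv0 (by linear_combination h1)
      have ha : a = 0 := by linear_combination ha1 - (u:ℚ) * hav
      rw [ha] at hav
      exact hv0 (by simpa using hav.symm)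
  · intro p hp
    simp only [Set.mem_insert_iff, Set.mem_singleton_iff] at hp
    rcases hp with rfl | rfl <;>
      refine ⟨?_, ?_⟩ <;>
      simp only [Matrix.cons_val_zero, Matrix.cons_val_one, Matrix.head_cons,
        Matrix.cons_val_two, Matrix.tail_cons, Matrix.cons_val_three] <;>
      field_simp <;> ring
end

section
/- Let P₁, P₂ ∈ ℤ[x] be nonzero polynomials and let H(·) denote the naive height (maximum absolute value of coefficients). Then there exist positive constants c₁(m,n), c₂(m,n) depending only on the degrees m = deg P₁, n = deg P₂ such that c₁ · H(P₁)·H(P₂) ≤ H(P₁·P₂) ≤ c₂ · H(P₁)·H(P₂). In particular, for P = P₁²·P₂ one has H(P) ≍ H(P₁)²·H(P₂). -/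
/-!
The naive height `H` and the Mahler measure `M` of a complex polynomial of degree at most `d`
are comparable: `M ≤ √(d + 1) H` (Landau's inequality) and `H ≤ 2 ^ d M` (each coefficient is,
up to the leading one, an elementary symmetric function of the roots). Since `M` is
multiplicative, `H(PQ)` and `H(P) H(Q)` agree up to factors depending only on the degrees.
Writing `P₁² P₂ = P₁ (P₁ P₂)` and applying this twice gives the second pair of bounds.
-/

/-- The naive height of an integer polynomial: the maximum absolute value of its
coefficients, as a real number. -/
noncomputable def naiveHeight (P : Polynomial ℤ) : ℝ :=
  ((P.support.sup fun i => (P.coeff i).natAbs : ℕ) : ℝ)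

open Polynomial

namespace Polynomial

variable {p q : ℂ[X]} {m n : ℕ}

theorem supNorm_le_two_pow_natDegree_mul_mahlerMeasure (p : ℂ[X]) :
    p.supNorm ≤ 2 ^ p.natDegree * p.mahlerMeasure :=
  p.supNorm_le_choose_natDegree_div_two_mul_mahlerMeasure.trans <| by
    gcongr
    · exact p.mahlerMeasure_nonneg
    · exact_mod_cast Nat.choose_le_two_pow _ _

theorem mahlerMeasure_le_sqrt_add_one_mul_supNorm (hp : p.natDegree ≤ m) :
    p.mahlerMeasure ≤ √(m + 1) * p.supNorm :=
  p.mahlerMeasure_le_sqrt_natDegree_add_one_mul_supNorm.trans <| by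
    gcongr
    exact p.supNorm_nonneg

theorem supNorm_mul_le (hp : p.natDegree ≤ m) (hq : q.natDegree ≤ n) :
    (p * q).supNorm ≤ 2 ^ (m + n) * √(m + 1) * √(n + 1) * p.supNorm * q.supNorm :=
  calc (p * q).supNorm ≤ 2 ^ (p * q).natDegree * (p * q).mahlerMeasure :=
        (p * q).supNorm_le_two_pow_natDegree_mul_mahlerMeasure
    _ ≤ 2 ^ (m + n) * (p.mahlerMeasure * q.mahlerMeasure) := by
        rw [mahlerMeasure_mul]
        gcongr
        · exact mul_nonneg p.mahlerMeasure_nonneg q.mahlerMeasure_nonneg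
        · norm_num
        · exact natDegree_mul_le.trans (add_le_add hp hq)
    _ ≤ 2 ^ (m + n) * ((√(m + 1) * p.supNorm) * (√(n + 1) * q.supNorm)) := by
        refine mul_le_mul_of_nonneg_left ?_ (by positivity)
        exact mul_le_mul (mahlerMeasure_le_sqrt_add_one_mul_supNorm hp)
          (mahlerMeasure_le_sqrt_add_one_mul_supNorm hq) q.mahlerMeasure_nonneg
          (mul_nonneg (by positivity) p.supNorm_nonneg)
    _ = _ := by ring

theorem supNorm_mul_supNorm_le (hp : p.natDegree ≤ m) (hq : q.natDegree ≤ n) :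
    p.supNorm * q.supNorm ≤ 2 ^ (m + n) * √(m + n + 1) * (p * q).supNorm :=
  calc p.supNorm * q.supNorm
      ≤ (2 ^ p.natDegree * p.mahlerMeasure) * (2 ^ q.natDegree * q.mahlerMeasure) :=
        mul_le_mul p.supNorm_le_two_pow_natDegree_mul_mahlerMeasure
          q.supNorm_le_two_pow_natDegree_mul_mahlerMeasure q.supNorm_nonneg
          (mul_nonneg (by positivity) p.mahlerMeasure_nonneg)
    _ = 2 ^ (p.natDegree + q.natDegree) * (p * q).mahlerMeasure := by
        rw [mahlerMeasure_mul]; ring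
    _ ≤ 2 ^ (m + n) * (√(m + n + 1) * (p * q).supNorm) := by
        refine mul_le_mul (pow_le_pow_right₀ one_le_two (add_le_add hp hq)) ?_
          (p * q).mahlerMeasure_nonneg (by positivity)
        exact_mod_cast mahlerMeasure_le_sqrt_add_one_mul_supNorm
          (natDegree_mul_le.trans (add_le_add hp hq))
    _ = _ := by ring

end Polynomial

theorem naiveHeight_eq_supNorm (P : ℤ[X]) :
    naiveHeight P = (P.map (Int.castRingHom ℂ)).supNorm := by
  refine IsGreatest.unique ?_ (isGreatest_supNorm _)
  simp only [coeff_map, eq_intCast, Complex.norm_intCast]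
  refine ⟨?_, ?_⟩
  · rcases P.support.eq_empty_or_nonempty with h | h
    · exact ⟨0, by simp [naiveHeight, support_eq_empty.mp h]⟩
    · obtain ⟨k, -, hk⟩ := Finset.exists_mem_eq_sup _ h fun i => (P.coeff i).natAbs
      exact ⟨k, by simp [naiveHeight, hk, Nat.cast_natAbs]⟩
  · rintro _ ⟨i, rfl⟩
    show |(P.coeff i : ℝ)| ≤ _
    by_cases hi : i ∈ P.support
    · rw [← Int.cast_abs, ← Nat.cast_natAbs, naiveHeight]
      exact_mod_cast Finset.le_sup (f := fun i => (P.coeff i).natAbs) hi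
    · simp [notMem_support_iff.mp hi, naiveHeight]

theorem natDegree_map_intCast_complex (P : ℤ[X]) :
    (P.map (Int.castRingHom ℂ)).natDegree = P.natDegree :=
  natDegree_map_eq_of_injective Int.cast_injective P

theorem exists_naiveHeight_mul_bounds (m n : ℕ) : ∃ c C : ℝ, 0 < c ∧ 0 < C ∧
    ∀ P Q : ℤ[X], P.natDegree ≤ m → Q.natDegree ≤ n →
      c * naiveHeight P * naiveHeight Q ≤ naiveHeight (P * Q) ∧
        naiveHeight (P * Q) ≤ C * naiveHeight P * naiveHeight Q := by
  have hB : 0 < (2 : ℝ) ^ (m + n) * √(m + n + 1) := by positivity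
  refine ⟨(2 ^ (m + n) * √(m + n + 1))⁻¹, 2 ^ (m + n) * √(m + 1) * √(n + 1),
    inv_pos.mpr hB, by positivity, fun P Q hP hQ => ?_⟩
  rw [← natDegree_map_intCast_complex P] at hP
  rw [← natDegree_map_intCast_complex Q] at hQ
  simp only [naiveHeight_eq_supNorm, Polynomial.map_mul]
  refine ⟨?_, supNorm_mul_le hP hQ⟩
  rw [mul_assoc, inv_mul_le_iff₀ hB]
  exact supNorm_mul_supNorm_le hP hQ

/-- Gelfond's lemma: `H(P₁P₂) ≍ H(P₁)H(P₂)` with constants depending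
only on the degrees; in particular `H(P₁²P₂) ≍ H(P₁)²H(P₂)`. -/
theorem stmt_18 (m n : ℕ) :
    ∃ c₁ c₂ c₃ c₄ : ℝ, 0 < c₁ ∧ 0 < c₂ ∧ 0 < c₃ ∧ 0 < c₄ ∧
      ∀ P₁ P₂ : Polynomial ℤ, P₁ ≠ 0 → P₂ ≠ 0 →
        P₁.natDegree = m → P₂.natDegree = n →
        (c₁ * naiveHeight P₁ * naiveHeight P₂ ≤ naiveHeight (P₁ * P₂) ∧
          naiveHeight (P₁ * P₂) ≤ c₂ * naiveHeight P₁ * naiveHeight P₂) ∧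
        (c₃ * naiveHeight P₁ ^ 2 * naiveHeight P₂ ≤ naiveHeight (P₁ ^ 2 * P₂) ∧
          naiveHeight (P₁ ^ 2 * P₂) ≤ c₄ * naiveHeight P₁ ^ 2 * naiveHeight P₂) := by
  obtain ⟨c, C, hc, hC, hmul⟩ := exists_naiveHeight_mul_bounds m n
  obtain ⟨c', C', hc', hC', hmul'⟩ := exists_naiveHeight_mul_bounds m (m + n)
  refine ⟨c, C, c' * c, C' * C, hc, hC, mul_pos hc' hc, mul_pos hC' hC, ?_⟩
  rintro P₁ P₂ - - rfl rfl
  have hH₁ : 0 ≤ naiveHeight P₁ := Nat.cast_nonneg _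
  obtain ⟨hlow, hupp⟩ := hmul P₁ P₂ le_rfl le_rfl
  obtain ⟨hlow', hupp'⟩ := hmul' P₁ (P₁ * P₂) le_rfl natDegree_mul_le
  rw [show P₁ ^ 2 * P₂ = P₁ * (P₁ * P₂) by ring]
  refine ⟨⟨hlow, hupp⟩, ?_, ?_⟩
  · calc c' * c * naiveHeight P₁ ^ 2 * naiveHeight P₂
        = c' * naiveHeight P₁ * (c * naiveHeight P₁ * naiveHeight P₂) := by ring
      _ ≤ c' * naiveHeight P₁ * naiveHeight (P₁ * P₂) := by gcongr
      _ ≤ naiveHeight (P₁ * (P₁ * P₂)) := hlow'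
  · calc naiveHeight (P₁ * (P₁ * P₂))
        ≤ C' * naiveHeight P₁ * naiveHeight (P₁ * P₂) := hupp'
      _ ≤ C' * naiveHeight P₁ * (C * naiveHeight P₁ * naiveHeight P₂) := by gcongr
      _ = C' * C * naiveHeight P₁ ^ 2 * naiveHeight P₂ := by ring
end
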